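/- Let E be a directed graph and A = KE its path algebra. A left ideal I of A is minimal if and only if I = Kx where x = Σ k_i λ_i is a nonzero linear combination of distinct paths λ_i all having the same source v, and v is a source of E (i.e., r^{-1}(v) = ∅). Moreover, for two such elements x, x', Kx ≅ Kx' as left A-modules if and only if all the paths involved share the same source vertex. -/

import Mathlib

/-!
Left multiplication in a path algebra prepends paths. If every path in the support of `x` starts
at a source `v`, the only path that can be prepended is the trivial path at `v`, so `a * x` is a
scalar multiple of `x`: the line `K x` is a left ideal, minimal because it is one-dimensional. For
the same reason every `K`-linear map between two such lines over `v` is `A`-linear, whereas the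
trivial path at `v` acts as `1` on a line over `v` and as `0` on a line over `v' ≠ v`.

Conversely, a nonzero element `y` of a minimal left ideal `S` yields, after multiplication by a
suitable trivial path, a nonzero `x ∈ S` supported on paths from a single vertex `v`. An edge `e`
ending at `v` would give `e x ≠ 0` in `S`, all of whose paths are longer than the shortest path of
`x`; the elements of `S` with only such long paths would then form a nonzero left subideal missing
`x`. So `v` is a source, and `S = K x` by minimality.
-/

/-- A directed graph: vertices, edges, source and range maps. -/
structure DGraph : Type 1 where
  V : Type
  Edge : Type
  s : Edge → V
  r : Edge → V

namespace DGraph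

/-- A list of edges is composable if consecutive edges match up. -/
def IsComposable (G : DGraph) (l : List G.Edge) : Prop :=
  l.Chain' (fun e f => G.r e = G.s f)

/-- A path in `G`: either a trivial path at a vertex, or a nonempty composable list of edges. -/
def GPath (G : DGraph) : Type :=
  G.V ⊕ {l : List G.Edge // l ≠ [] ∧ G.IsComposable l}

namespace GPath

variable {G : DGraph}

/-- The source of a path. -/
def src : GPath G → G.V
  | Sum.inl v => v
  | Sum.inr l => G.s (l.1.head l.2.1)

/-- The range of a path. -/
def rng : GPath G → G.V
  | Sum.inl v => v
  | Sum.inr l => G.r (l.1.getLast l.2.1)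

/-- The length of a path. -/
def length : GPath G → ℕ
  | Sum.inl _ => 0
  | Sum.inr l => l.1.length

/-- The trivial path at a vertex. -/
def ofVertex (v : G.V) : GPath G := Sum.inl v

/-- The length-one path given by an edge. -/
def ofEdge (e : G.Edge) : GPath G :=
  Sum.inr ⟨[e], by simp [IsComposable, List.Chain']⟩

/-- Concatenation of composable paths. -/
def comp : (p q : GPath G) → p.rng = q.src → GPath G
  | Sum.inl _, q, _ => q
  | Sum.inr l, Sum.inl _, _ => Sum.inr l
  | Sum.inr l, Sum.inr m, h => Sum.inr ⟨l.1 ++ m.1, by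
      refine ⟨by simp [l.2.1], l.2.2.append m.2.2 ?_⟩
      intro x hx y hy
      rw [List.getLast?_eq_some_getLast l.2.1] at hx
      rw [List.head?_eq_some_head m.2.1] at hy
      cases hx
      cases hy
      exact h⟩

end GPath

end DGraph

open DGraph

/-- A realization of the path algebra of the graph `G` over the field `K`:
a `K`-algebra with a basis indexed by the paths of `G`, multiplying by concatenation. -/
structure PathAlgebraOn (K : Type) [Field K] (G : DGraph) (A : Type)
    [NonUnitalRing A] [Module K A] where
  basis : Module.Basis (GPath G) K A
  mul_comp : ∀ (p q : GPath G) (h : p.rng = q.src),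
      basis p * basis q = basis (p.comp q h)
  mul_ncomp : ∀ p q : GPath G, p.rng ≠ q.src → basis p * basis q = 0

/-- A `K`-subspace of `A` which is a left ideal. -/
def IsLeftIdeal (K : Type) [Field K] (A : Type) [NonUnitalRing A] [Module K A]
    (S : Submodule K A) : Prop :=
  ∀ a : A, ∀ x ∈ S, a * x ∈ S

/-- A `K`-subspace of `A` which is a right ideal. -/
def IsRightIdeal (K : Type) [Field K] (A : Type) [NonUnitalRing A] [Module K A]
    (S : Submodule K A) : Prop :=
  ∀ a : A, ∀ x ∈ S, x * a ∈ S

/-- The descending chain condition on left ideals. -/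
def IsLeftArtinianAlg (K : Type) [Field K] (A : Type) [NonUnitalRing A] [Module K A] : Prop :=
  ∀ f : ℕ → Submodule K A, (∀ m, IsLeftIdeal K A (f m)) → (∀ m, f (m + 1) ≤ f m) →
    ∃ m, ∀ l, m ≤ l → f l = f m

/-- The ascending chain condition on left ideals. -/
def IsLeftNoetherianAlg (K : Type) [Field K] (A : Type) [NonUnitalRing A] [Module K A] : Prop :=
  ∀ f : ℕ → Submodule K A, (∀ m, IsLeftIdeal K A (f m)) → (∀ m, f m ≤ f (m + 1)) →
    ∃ m, ∀ l, m ≤ l → f l = f m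

/-- A minimal left ideal: nonzero, and containing no nonzero proper left subideal. -/
def IsMinimalLeftIdeal (K : Type) [Field K] (A : Type) [NonUnitalRing A] [Module K A]
    (S : Submodule K A) : Prop :=
  IsLeftIdeal K A S ∧ S ≠ ⊥ ∧
    ∀ T : Submodule K A, IsLeftIdeal K A T → T ≤ S → T = ⊥ ∨ T = S

/-- A minimal right ideal. -/
def IsMinimalRightIdeal (K : Type) [Field K] (A : Type) [NonUnitalRing A] [Module K A]
    (S : Submodule K A) : Prop :=
  IsRightIdeal K A S ∧ S ≠ ⊥ ∧
    ∀ T : Submodule K A, IsRightIdeal K A T → T ≤ S → T = ⊥ ∨ T = S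

/-- `x` is a nonzero linear combination of paths all starting at the vertex `v`,
and `v` is a source of the graph. -/
def SourceSupported {K : Type} [Field K] {G : DGraph} {A : Type} [NonUnitalRing A]
    [Module K A] (PA : PathAlgebraOn K G A) (v : G.V) (x : A) : Prop :=
  (∀ e : G.Edge, G.r e ≠ v) ∧ ∀ p : GPath G, PA.basis.repr x p ≠ 0 → p.src = v

namespace DGraph

def IsSource (G : DGraph) (v : G.V) : Prop :=
  ∀ e : G.Edge, G.r e ≠ v

namespace GPath

variable {G : DGraph}

@[simp] lemma rng_ofEdge (e : G.Edge) : (ofEdge e : GPath G).rng = G.r e := rfl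

@[simp] lemma length_ofEdge (e : G.Edge) : (ofEdge e : GPath G).length = 1 := rfl

lemma ofVertex_injective : Function.Injective (ofVertex : G.V → GPath G) :=
  Sum.inl_injective

@[simp] lemma ofVertex_comp (v : G.V) (q : GPath G) (h : (ofVertex v).rng = q.src) :
    (ofVertex v).comp q h = q :=
  rfl

lemma length_comp (p q : GPath G) (h : p.rng = q.src) :
    (p.comp q h).length = p.length + q.length := by
  rcases p with v | l
  · exact (zero_add _).symm
  · rcases q with w | m
    · rfl
    · exact List.length_append

lemma comp_inj_right {p q q' : GPath G} {h : p.rng = q.src} {h' : p.rng = q'.src} :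
    p.comp q h = p.comp q' h' ↔ q = q' := by
  refine ⟨fun hc => ?_, fun hq => by subst hq; rfl⟩
  rcases p with v | l
  · exact hc
  rcases q with w | m <;> rcases q' with w' | m'
  · exact congrArg Sum.inl (h.symm.trans h')
  · have hlen := congrArg length hc
    change l.1.length = (l.1 ++ m'.1).length at hlen
    rw [List.length_append] at hlen
    exact absurd (List.length_eq_zero_iff.mp (by omega)) m'.2.1
  · have hlen := congrArg length hc
    change (l.1 ++ m.1).length = l.1.length at hlen
    rw [List.length_append] at hlen
    exact absurd (List.length_eq_zero_iff.mp (by omega)) m.2.1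
  · have hlist : l.1 ++ m.1 = l.1 ++ m'.1 := congrArg Subtype.val (Sum.inr.inj hc)
    exact congrArg Sum.inr (Subtype.ext (List.append_cancel_left hlist))

lemma eq_ofVertex_of_isSource {v : G.V} (hv : G.IsSource v) {q : GPath G} (hq : q.rng = v) :
    q = ofVertex v := by
  rcases q with w | l
  · exact congrArg Sum.inl hq
  · exact absurd hq (hv _)

end GPath

end DGraph

namespace PathAlgebraOn

open GPath

variable {K : Type} [Field K] {G : DGraph} {A : Type} [NonUnitalRing A] [Module K A]
  (PA : PathAlgebraOn K G A)

def pathSpan (P : Set (GPath G)) : Submodule K A :=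
  Submodule.span K (PA.basis '' P)

variable {PA}

lemma mem_pathSpan {P : Set (GPath G)} {x : A} :
    x ∈ PA.pathSpan P ↔ ∀ p, PA.basis.repr x p ≠ 0 → p ∈ P := by
  simp only [pathSpan, Module.Basis.mem_span_image, Set.subset_def, Finset.mem_coe,
    Finsupp.mem_support_iff]

lemma basis_mem_pathSpan {P : Set (GPath G)} {p : GPath G} (hp : p ∈ P) :
    PA.basis p ∈ PA.pathSpan P :=
  Submodule.subset_span (Set.mem_image_of_mem _ hp)

variable (PA) in
lemma mem_pathSpan_univ (x : A) : x ∈ PA.pathSpan Set.univ := by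
  rw [pathSpan, Set.image_univ, PA.basis.span_eq]
  exact Submodule.mem_top

lemma sourceSupported_iff {v : G.V} {x : A} :
    SourceSupported PA v x ↔ G.IsSource v ∧ x ∈ PA.pathSpan {p | p.src = v} := by
  rw [mem_pathSpan]
  rfl

variable (PA) in
lemma basis_mul_basis_of_isSource {v : G.V} (hv : G.IsSource v) {p : GPath G} (hp : p.src = v)
    (q : GPath G) :
    PA.basis q * PA.basis p = PA.basis.repr (PA.basis q) (ofVertex v) • PA.basis p := by
  rw [Module.Basis.repr_self]
  by_cases hq : q.rng = p.src
  · obtain rfl := eq_ofVertex_of_isSource hv (hq.trans hp)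
    rw [PA.mul_comp _ _ hq, ofVertex_comp, Finsupp.single_eq_same, one_smul]
  · rw [PA.mul_ncomp _ _ hq, Finsupp.single_eq_of_ne', zero_smul]
    rintro rfl
    exact hq hp.symm

variable [SMulCommClass K A A]

variable (PA) in
lemma repr_basis_mul_comp (p q : GPath G) (h : p.rng = q.src) (y : A) :
    PA.basis.repr (PA.basis p * y) (p.comp q h) = PA.basis.repr y q := by
  classical
  have hcoord : (PA.basis.coord (p.comp q h)).comp (LinearMap.mulLeft K (PA.basis p)) =
      PA.basis.coord q := by
    refine PA.basis.ext fun r => ?_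
    simp only [LinearMap.comp_apply, LinearMap.mulLeft_apply, Module.Basis.coord_apply,
      Module.Basis.repr_self]
    by_cases hr : p.rng = r.src
    · rw [PA.mul_comp p r hr, Module.Basis.repr_self, Finsupp.single_apply,
        Finsupp.single_apply, comp_inj_right]
    · rw [PA.mul_ncomp p r hr, map_zero, Finsupp.zero_apply, Finsupp.single_eq_of_ne]
      rintro rfl
      exact hr h
  exact LinearMap.congr_fun hcoord y

variable [IsScalarTower K A A]

lemma mul_mem_pathSpan {P Q R : Set (GPath G)}
    (hPQ : ∀ p ∈ P, ∀ q ∈ Q, ∀ h : p.rng = q.src, p.comp q h ∈ R) {x y : A}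
    (hx : x ∈ PA.pathSpan P) (hy : y ∈ PA.pathSpan Q) : x * y ∈ PA.pathSpan R := by
  have hle : Submodule.map₂ (LinearMap.mul K A) (PA.pathSpan P) (PA.pathSpan Q) ≤
      PA.pathSpan R := by
    rw [pathSpan, pathSpan, Submodule.map₂_span_span, Submodule.span_le]
    rintro _ ⟨_, ⟨p, hp, rfl⟩, _, ⟨q, hq, rfl⟩, rfl⟩
    change PA.basis p * PA.basis q ∈ _
    by_cases h : p.rng = q.src
    · rw [PA.mul_comp p q h]
      exact basis_mem_pathSpan (hPQ p hp q hq h)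
    · rw [PA.mul_ncomp p q h]
      exact zero_mem _
  exact hle (Submodule.apply_mem_map₂ _ hx hy)

lemma mul_eq_smul_of_isSource {v : G.V} (hv : G.IsSource v) {x : A}
    (hx : x ∈ PA.pathSpan {p | p.src = v}) (a : A) :
    a * x = PA.basis.repr a (ofVertex v) • x := by
  induction hx using Submodule.span_induction with
  | mem _ hy =>
    obtain ⟨p, hp, rfl⟩ := hy
    have hmul : LinearMap.mulRight K (PA.basis p) =
        (PA.basis.coord (ofVertex v)).smulRight (PA.basis p) :=
      PA.basis.ext fun q => basis_mul_basis_of_isSource PA hv hp q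
    exact LinearMap.congr_fun hmul a
  | zero => rw [mul_zero, smul_zero]
  | add x y _ _ hx hy => rw [mul_add, hx, hy, smul_add]
  | smul c x _ hx => rw [mul_smul_comm, hx, smul_comm]

lemma isLeftIdeal_pathSpan_length (n : ℕ) : IsLeftIdeal K A (PA.pathSpan {p | n ≤ p.length}) :=
  fun a _ hy => mul_mem_pathSpan (fun p _ q (hq : n ≤ q.length) h => by
    simp only [Set.mem_ofPred_eq, length_comp]; omega) (mem_pathSpan_univ PA a) hy

lemma isLeftIdeal_span_singleton {v : G.V} (hv : G.IsSource v) {x : A}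
    (hx : x ∈ PA.pathSpan {p | p.src = v}) : IsLeftIdeal K A (K ∙ x) := by
  intro a y hy
  obtain ⟨c, rfl⟩ := Submodule.mem_span_singleton.mp hy
  rw [mul_smul_comm, mul_eq_smul_of_isSource hv hx, smul_smul]
  exact Submodule.smul_mem _ _ (Submodule.mem_span_singleton_self x)

lemma isMinimalLeftIdeal_span_singleton {v : G.V} (hv : G.IsSource v) {x : A} (hx0 : x ≠ 0)
    (hx : x ∈ PA.pathSpan {p | p.src = v}) : IsMinimalLeftIdeal K A (K ∙ x) :=
  ⟨isLeftIdeal_span_singleton hv hx, by simpa using hx0,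
    fun _ _ hT => (nonzero_span_atom x hx0).le_iff.mp hT⟩

/-- If an edge `e` ended at `v`, the left ideal `S ∩ (paths of length > n)`, with `n` the least
length in the support of `x`, would contain `e x ≠ 0` but not `x`. -/
lemma isSource_of_mem_isMinimalLeftIdeal {S : Submodule K A} (hS : IsMinimalLeftIdeal K A S)
    {v : G.V} {x : A} (hxS : x ∈ S) (hx0 : x ≠ 0) (hx : x ∈ PA.pathSpan {p | p.src = v}) :
    G.IsSource v := by
  intro e he
  obtain ⟨p₁, hp₁, hmin⟩ := (PA.basis.repr x).support.exists_min_image length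
    (Finsupp.support_nonempty_iff.mpr (by simpa using hx0))
  rw [Finsupp.mem_support_iff] at hp₁
  have hxn : x ∈ PA.pathSpan {p | p₁.length ≤ p.length} :=
    mem_pathSpan.mpr fun p hp => hmin p (Finsupp.mem_support_iff.mpr hp)
  have hcomp : (ofEdge e).rng = p₁.src := by rw [rng_ofEdge, he, mem_pathSpan.mp hx p₁ hp₁]
  set T := S ⊓ PA.pathSpan {p | p₁.length + 1 ≤ p.length}
  have hT : IsLeftIdeal K A T :=
    fun a y hy => ⟨hS.1 a y hy.1, isLeftIdeal_pathSpan_length _ a y hy.2⟩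
  have hzT : PA.basis (ofEdge e) * x ∈ T := by
    refine ⟨hS.1 _ x hxS, mul_mem_pathSpan ?_ (basis_mem_pathSpan rfl) hxn⟩
    rintro _ rfl q (hq : p₁.length ≤ q.length) h
    simp only [Set.mem_ofPred_eq, length_comp, length_ofEdge]
    omega
  have hz0 : PA.basis (ofEdge e) * x ≠ 0 := fun h0 => hp₁ (by
    rw [← repr_basis_mul_comp PA _ _ hcomp x, h0, map_zero, Finsupp.zero_apply])
  rcases hS.2.2 T hT inf_le_left with hbot | htop
  · exact hz0 ((Submodule.mem_bot K).mp (hbot ▸ hzT))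
  · have := mem_pathSpan.mp (htop.ge hxS).2 p₁ hp₁
    simp at this

/-- For `p₀` in the support of `y ∈ S`, multiplying by the trivial path at the source `v` of
`p₀` keeps the coefficient of `p₀` and kills every path not starting at `v`. -/
lemma exists_eq_span_of_isMinimalLeftIdeal {S : Submodule K A} (hS : IsMinimalLeftIdeal K A S) :
    ∃ (x : A) (v : G.V), x ≠ 0 ∧ SourceSupported PA v x ∧ S = K ∙ x := by
  obtain ⟨y, hyS, hy0⟩ := (Submodule.ne_bot_iff S).mp hS.2.1
  obtain ⟨p₀, hp₀⟩ : ∃ p, PA.basis.repr y p ≠ 0 :=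
    Finsupp.ne_iff.mp ((map_ne_zero_iff _ PA.basis.repr.injective).mpr hy0)
  set v := p₀.src
  set x := PA.basis (ofVertex v) * y
  have hx : x ∈ PA.pathSpan {p | p.src = v} := by
    refine mul_mem_pathSpan ?_ (basis_mem_pathSpan rfl) (mem_pathSpan_univ PA y)
    rintro _ rfl q - h
    exact h.symm
  have hxp₀ : PA.basis.repr x p₀ = PA.basis.repr y p₀ := repr_basis_mul_comp PA _ p₀ rfl y
  have hx0 : x ≠ 0 := fun h0 => hp₀ (by rw [← hxp₀, h0, map_zero, Finsupp.zero_apply])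
  have hxS : x ∈ S := hS.1 _ y hyS
  have hv := isSource_of_mem_isMinimalLeftIdeal hS hxS hx0 hx
  refine ⟨x, v, hx0, sourceSupported_iff.mpr ⟨hv, hx⟩, ?_⟩
  have hle : K ∙ x ≤ S := (Submodule.span_singleton_le_iff_mem _ _).mpr hxS
  refine ((hS.2.2 _ (isLeftIdeal_span_singleton hv hx) hle).resolve_left ?_).symm
  simpa using hx0

lemma map_mul_of_isSource {v : G.V} (hv : G.IsSource v) {x x' : A}
    (hx : x ∈ PA.pathSpan {p | p.src = v}) (hx' : x' ∈ PA.pathSpan {p | p.src = v})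
    (g : (K ∙ x) →ₗ[K] (K ∙ x')) (a : A) (m m' : K ∙ x) (hm : (m' : A) = a * m) :
    (g m' : A) = a * g m := by
  have hm' : m' = PA.basis.repr a (ofVertex v) • m := Subtype.ext <| by
    rw [hm, Submodule.coe_smul,
      mul_eq_smul_of_isSource hv ((Submodule.span_singleton_le_iff_mem _ _).mpr hx m.2)]
  rw [hm', map_smul, Submodule.coe_smul,
    mul_eq_smul_of_isSource hv ((Submodule.span_singleton_le_iff_mem _ _).mpr hx' (g m).2)]

lemma eq_of_linearEquiv {v v' : G.V} (hv : G.IsSource v) (hv' : G.IsSource v') {x x' : A}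
    (hx0 : x ≠ 0) (hx : x ∈ PA.pathSpan {p | p.src = v})
    (hx' : x' ∈ PA.pathSpan {p | p.src = v'}) (g : (K ∙ x) ≃ₗ[K] (K ∙ x'))
    (hg : ∀ (a : A) (m m' : K ∙ x), (m' : A) = a * m → (g m' : A) = a * g m) : v = v' := by
  by_contra hne
  let m : K ∙ x := ⟨x, Submodule.mem_span_singleton_self x⟩
  have hm : (m : A) = PA.basis (ofVertex v) * m := by
    change x = _ * x
    rw [mul_eq_smul_of_isSource hv hx, Module.Basis.repr_self, Finsupp.single_eq_same, one_smul]
  have hgm : (g m : A) = 0 := by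
    rw [hg _ m m hm,
      mul_eq_smul_of_isSource hv' ((Submodule.span_singleton_le_iff_mem _ _).mpr hx' (g m).2),
      Module.Basis.repr_self, Finsupp.single_eq_of_ne' (ofVertex_injective.ne hne), zero_smul]
  exact hx0 (congrArg Subtype.val (g.map_eq_zero_iff.mp (Subtype.ext hgm)))

end PathAlgebraOn

/-- the minimal left ideals of a path algebra are exactly the lines `Kx`
with `x` a combination of paths with common source a source-vertex `v`; two such are
isomorphic as left modules iff the source vertices coincide. -/
theorem stmt10 (K : Type) [Field K] (G : DGraph)
    (A : Type) [NonUnitalRing A] [Module K A] [SMulCommClass K A A] [IsScalarTower K A A]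
    (PA : PathAlgebraOn K G A) :
    (∀ S : Submodule K A, IsMinimalLeftIdeal K A S ↔
      ∃ (x : A) (v : G.V), x ≠ 0 ∧ SourceSupported PA v x ∧ S = Submodule.span K {x}) ∧
    (∀ (x x' : A) (v v' : G.V), x ≠ 0 → x' ≠ 0 →
      SourceSupported PA v x → SourceSupported PA v' x' →
      ((∃ g : (Submodule.span K {x} : Submodule K A) ≃ₗ[K]
              (Submodule.span K {x'} : Submodule K A),
          ∀ (a : A) (m m' : (Submodule.span K {x} : Submodule K A)),
            (m' : A) = a * (m : A) → ((g m' : A) = a * (g m : A))) ↔ v = v')) := by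
  open PathAlgebraOn in
  refine ⟨fun S => ⟨exists_eq_span_of_isMinimalLeftIdeal, ?_⟩,
    fun x x' v v' hx0 hx'0 hx hx' => ?_⟩
  · rintro ⟨x, v, hx0, hx, rfl⟩
    obtain ⟨hv, hx⟩ := sourceSupported_iff.mp hx
    exact isMinimalLeftIdeal_span_singleton hv hx0 hx
  obtain ⟨hv, hx⟩ := sourceSupported_iff.mp hx
  obtain ⟨hv', hx'⟩ := sourceSupported_iff.mp hx'
  constructor
  · rintro ⟨g, hg⟩
    exact eq_of_linearEquiv hv hv' hx0 hx hx' g hg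
  · rintro rfl
    exact ⟨(LinearEquiv.toSpanNonzeroSingleton K A x hx0).symm.trans
      (LinearEquiv.toSpanNonzeroSingleton K A x' hx'0), map_mul_of_isSource hv hx hx' _⟩
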